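/- If a₁,…,a_q > 0 satisfy ∑ᵢ aᵢ < 2q, then for all u ∈ [0,2], g_{a₁,…,a_q}(u) = 1 + ∑_{m≥1} d_m (u−1)^m, where d_m = (1/(q−1)!)[ (m+q−1)⋯(m+1)·((∑aᵢ−q)/q)^m + ∑_{k+j=m, 1≤j≤q} (k+q−1)⋯(k+1)·((∑aᵢ−q)/q)^k·(σ_j + σ_{j−1}) ], with σ₀=1, σᵢ = ∑_{2≤j₁<⋯<jᵢ≤q} ∏_l (1−a_{j_l}) for 1≤i≤q−1, σᵢ=0 for i≥q. -/

import Mathlib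

noncomputable def g (q : ℕ) (a : ℕ → ℝ) (u : ℝ) : ℝ :=
  (q : ℝ) ^ q * u * (∏ i ∈ Finset.Icc 2 q, (a i + (1 - a i) * u)) /
    ((∑ i ∈ Finset.Icc 1 q, a i) - ((∑ i ∈ Finset.Icc 1 q, a i) - q) * u) ^ q

/-- elementary symmetric functions of the (1-aᵢ), i = 2,…,q -/
noncomputable def tau (q : ℕ) (a : ℕ → ℝ) (i : ℕ) : ℝ :=
  ∑ s ∈ (Finset.Icc 2 q).powersetCard i, ∏ j ∈ s, (1 - a j)

/-- the power series coefficients of g around 1 -/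
noncomputable def d (q : ℕ) (a : ℕ → ℝ) (m : ℕ) : ℝ :=
  (1 / (Nat.factorial (q - 1))) *
    ((∏ l ∈ Finset.range (q - 1), ((m : ℝ) + 1 + l)) *
        (((∑ i ∈ Finset.Icc 1 q, a i) - q) / q) ^ m
      + ∑ j ∈ Finset.Icc 1 (min q m),
          (∏ l ∈ Finset.range (q - 1), ((m - j : ℕ) + 1 + l : ℝ)) *
            (((∑ i ∈ Finset.Icc 1 q, a i) - q) / q) ^ (m - j) *
            (tau q a j + tau q a (j - 1)))

/-
With t = u - 1 and c = (∑ aᵢ - q)/q, the denominator of g is q^q (1 - ct)^q, and the numerator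
u ∏ (aᵢ + (1 - aᵢ)u) = (1 + t) ∏ (1 + (1 - aᵢ)t) is a polynomial in t of degree at most q with
coefficients σ_j + σ_{j-1}. The hypotheses give |c| < 1 and |t| ≤ 1, so
(1 - ct)^(-q) = ∑_k C(k+q-1, q-1) c^k t^k, and d_m is the coefficient of t^m in the Cauchy
product of this series with the numerator; in d the binomial coefficient appears as
(k+1)⋯(k+q-1)/(q-1)!.
-/

open Finset

section CauchyProduct

variable {α : Type*} [CommSemiring α] [TopologicalSpace α] [IsTopologicalSemiring α]

theorem HasSum.ite_le_mul_pow {b : ℕ → α} {t B : α} (hb : HasSum (fun k ↦ b k * t ^ k) B)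
    (j : ℕ) : HasSum (fun m ↦ if j ≤ m then b (m - j) * t ^ m else 0) (t ^ j * B) := by
  refine ((add_left_injective j).hasSum_iff fun m hm ↦ ?_).mp ?_
  · rw [if_neg fun hjm ↦ hm ⟨m - j, Nat.sub_add_cancel hjm⟩]
  · refine (hb.mul_left (t ^ j)).congr_fun fun k ↦ ?_
    rw [Function.comp_apply, if_pos (Nat.le_add_left j k), Nat.add_sub_cancel, pow_add]
    ring

theorem HasSum.sum_range_mul_of_eq_zero {e b : ℕ → α} {t B : α} {N : ℕ}
    (he : ∀ j, N < j → e j = 0) (hb : HasSum (fun k ↦ b k * t ^ k) B) :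
    HasSum (fun m ↦ (∑ j ∈ range (m + 1), e j * b (m - j)) * t ^ m)
      ((∑ j ∈ range (N + 1), e j * t ^ j) * B) := by
  have hsum := hasSum_sum fun j (_ : j ∈ range (N + 1)) ↦ (hb.ite_le_mul_pow j).mul_left (e j)
  simp only [mul_ite, mul_zero, ← sum_filter, ← mul_assoc, ← sum_mul] at hsum
  refine hsum.congr_fun fun m ↦ congrArg (· * t ^ m) ?_
  refine (sum_subset (fun j hj ↦ ?_) fun j hj hj' ↦ ?_).symm
  · simp only [mem_filter, mem_range] at hj ⊢
    omega
  · simp only [mem_filter, mem_range, not_and, not_le] at hj hj'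
    rw [he j (by omega), zero_mul]

end CauchyProduct

theorem Finset.prod_one_add_mul_eq_sum_powersetCard {ι R : Type*} [CommSemiring R]
    (s : Finset ι) (b : ι → R) (t : R) :
    ∏ i ∈ s, (1 + b i * t) =
      ∑ j ∈ range (#s + 1), (∑ w ∈ s.powersetCard j, ∏ i ∈ w, b i) * t ^ j := by
  rw [prod_one_add, sum_powerset]
  refine sum_congr rfl fun j _ ↦ ?_
  rw [sum_mul]
  refine sum_congr rfl fun w hw ↦ ?_
  rw [prod_mul_distrib, prod_const, (mem_powersetCard.mp hw).2]

theorem prod_range_natCast_add_one_add (k n : ℕ) :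
    ∏ l ∈ range n, ((k : ℝ) + 1 + l) = n.factorial * (k + n).choose n := by
  rw_mod_cast [← Nat.ascFactorial_eq_factorial_mul_choose, Nat.ascFactorial_eq_prod_range]

noncomputable def geomRatio (q : ℕ) (a : ℕ → ℝ) : ℝ :=
  ((∑ i ∈ Icc 1 q, a i) - q) / q

/-- The coefficient of `(u - 1)^j` in `u ∏ᵢ (aᵢ + (1 - aᵢ)u)`, i.e. `σ_j + σ_{j-1}` with
`σ_{-1} = 0`. -/
noncomputable def numCoeff (q : ℕ) (a : ℕ → ℝ) (j : ℕ) : ℝ :=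
  tau q a j + if j = 0 then 0 else tau q a (j - 1)

section

variable {q : ℕ} {a : ℕ → ℝ}

@[simp]
theorem tau_zero : tau q a 0 = 1 := by
  simp [tau]

theorem tau_eq_zero_of_lt {j : ℕ} (hj : q - 1 < j) : tau q a j = 0 := by
  rw [tau, powersetCard_eq_empty.mpr (by rwa [Nat.card_Icc]), sum_empty]

@[simp]
theorem numCoeff_zero : numCoeff q a 0 = 1 := by
  simp [numCoeff]

theorem numCoeff_eq_zero_of_lt (hq : 0 < q) {j : ℕ} (hj : q < j) : numCoeff q a j = 0 := by
  rw [numCoeff, if_neg (by omega), tau_eq_zero_of_lt (by omega), tau_eq_zero_of_lt (by omega),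
    add_zero]

theorem prod_eq_sum_tau (hq : 0 < q) (u : ℝ) :
    ∏ i ∈ Icc 2 q, (a i + (1 - a i) * u) = ∑ j ∈ range q, tau q a j * (u - 1) ^ j := by
  have hcard : #(Icc 2 q) + 1 = q := by rw [Nat.card_Icc]; omega
  rw [prod_congr rfl fun i _ ↦ (by ring : a i + (1 - a i) * u = 1 + (1 - a i) * (u - 1)),
    prod_one_add_mul_eq_sum_powersetCard, hcard]
  rfl

theorem mul_prod_eq_sum_numCoeff (hq : 0 < q) (u : ℝ) :
    u * ∏ i ∈ Icc 2 q, (a i + (1 - a i) * u) =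
      ∑ j ∈ range (q + 1), numCoeff q a j * (u - 1) ^ j := by
  simp only [numCoeff, add_mul, sum_add_distrib, ite_mul, zero_mul]
  rw [sum_range_succ, tau_eq_zero_of_lt (by omega), sum_range_succ', if_pos rfl]
  simp only [Nat.add_one_ne_zero, if_false, Nat.add_sub_cancel, pow_succ, ← mul_assoc]
  rw [prod_eq_sum_tau hq, ← sum_mul]
  ring

theorem g_eq_div (hq : 0 < q) (u : ℝ) :
    g q a u =
      u * (∏ i ∈ Icc 2 q, (a i + (1 - a i) * u)) / (1 - geomRatio q a * (u - 1)) ^ q := by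
  have hq' : (q : ℝ) ≠ 0 := by positivity
  have hden : (∑ i ∈ Icc 1 q, a i) - ((∑ i ∈ Icc 1 q, a i) - q) * u =
      q * (1 - geomRatio q a * (u - 1)) := by
    rw [geomRatio]
    field_simp
    ring
  rw [g, hden, mul_pow, mul_assoc, mul_div_mul_left _ _ (pow_ne_zero q hq')]

theorem d_eq_sum_numCoeff (hq : 0 < q) (m : ℕ) :
    d q a m = ∑ j ∈ range (m + 1),
      numCoeff q a j * (((m - j + (q - 1)).choose (q - 1) : ℕ) * geomRatio q a ^ (m - j)) := by
  have hsupp : insert 0 (Icc 1 (min q m)) ⊆ range (m + 1) := by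
    intro j
    simp only [mem_insert, mem_Icc, mem_range]
    omega
  rw [← sum_subset hsupp fun j hj hj' ↦ ?_, sum_insert (by simp), numCoeff_zero,
    sum_congr rfl fun j hj ↦ by rw [numCoeff, if_neg (by simp at hj; omega)]]
  · have hfac : ((q - 1).factorial : ℝ) ≠ 0 := by positivity
    simp only [d, prod_range_natCast_add_one_add, Nat.sub_zero]
    rw [show ((∑ i ∈ Icc 1 q, a i) - q) / q = geomRatio q a from rfl]
    simp only [mul_assoc, ← mul_sum, ← mul_add, one_div, inv_mul_cancel_left₀ hfac]
    rw [one_mul]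
    exact congrArg _ (sum_congr rfl fun j _ ↦ by ring)
  · simp only [mem_insert, mem_Icc, mem_range, not_or, not_and, not_le] at hj hj'
    rw [numCoeff_eq_zero_of_lt hq (by omega), zero_mul]

theorem d_zero (hq : 0 < q) : d q a 0 = 1 := by
  simp [d_eq_sum_numCoeff hq]

theorem abs_geomRatio_lt_one (hq : 0 < q) (ha : ∀ i ∈ Icc 1 q, 0 < a i)
    (hsum : ∑ i ∈ Icc 1 q, a i < 2 * q) : |geomRatio q a| < 1 := by
  have hq' : (0 : ℝ) < q := by exact_mod_cast hq
  have hS : 0 < ∑ i ∈ Icc 1 q, a i := sum_pos ha ⟨1, mem_Icc.mpr ⟨le_rfl, hq⟩⟩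
  rw [geomRatio, abs_div, abs_of_pos hq', div_lt_one hq', abs_lt]
  constructor <;> linarith

theorem hasSum_d_mul_pow (hq : 0 < q) {u : ℝ} (hu : |geomRatio q a * (u - 1)| < 1) :
    HasSum (fun m ↦ d q a m * (u - 1) ^ m) (g q a u) := by
  have hgeom := hasSum_choose_mul_geometric_of_norm_lt_one (q - 1) (Real.norm_eq_abs _ ▸ hu)
  rw [Nat.sub_add_cancel hq] at hgeom
  simp only [mul_pow, ← mul_assoc] at hgeom
  have hprod := hgeom.sum_range_mul_of_eq_zero fun j ↦ numCoeff_eq_zero_of_lt (a := a) hq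
  rw [← mul_prod_eq_sum_numCoeff hq, mul_one_div, ← g_eq_div hq] at hprod
  simpa only [d_eq_sum_numCoeff hq] using hprod

end

theorem stmt_15 (q : ℕ) (hq : 1 ≤ q) (a : ℕ → ℝ)
    (ha : ∀ i ∈ Finset.Icc 1 q, 0 < a i)
    (hsum : ∑ i ∈ Finset.Icc 1 q, a i < 2 * q)
    (u : ℝ) (hu : u ∈ Set.Icc (0 : ℝ) 2) :
    HasSum (fun m : ℕ => d q a (m + 1) * (u - 1) ^ (m + 1)) (g q a u - 1) := by
  have hu' : |u - 1| ≤ 1 := abs_sub_le_iff.mpr ⟨by linarith [hu.2], by linarith [hu.1]⟩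
  have hx : |geomRatio q a * (u - 1)| < 1 := by
    rw [abs_mul]
    exact (mul_le_of_le_one_right (abs_nonneg _) hu').trans_lt (abs_geomRatio_lt_one hq ha hsum)
  have h := hasSum_d_mul_pow hq hx
  rw [← hasSum_nat_add_iff' 1] at h
  simpa [d_zero hq] using h
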